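/- Fix an integer N ≥ 3 and a real L ≥ 0. Let W_1, …, W_{N−1} be mutually independent finite-valued random variables with H(W_k) = L for each k, let Q be a finite-valued random variable with I(⟨W_1,…,W_{N−1}⟩ ; Q) = 0, and let A_n^{[k]} (for n ∈ {1,…,N}, k ∈ {1,…,N−1}) be finite-valued random variables satisfying: (i) H(A_1^{[k]} | ⟨W_1, Q⟩) = 0 and H(A_N^{[k]} | ⟨W_{N−1}, Q⟩) = 0 for all k, and H(A_n^{[k]} | ⟨W_{n−1}, W_n, Q⟩) = 0 for all 2 ≤ n ≤ N−1 and all k; (ii) H(W_k | ⟨A_1^{[k]}, …, A_N^{[k]}, Q⟩) = 0 for all k ∈ {1,…,N−1}; (iii) for every n with 2 ≤ n ≤ N−1 and every subset S ⊆ {1,…,N−1}, H(A_n^{[n]} | ⟨W_S, Q⟩) = H(A_n^{[n−1]} | ⟨W_S, Q⟩), where W_S denotes the joint random variable of {W_ℓ : ℓ ∈ S}. Then ∑_{k=1}^{N−1} ∑_{n=1}^{N} H(A_n^{[k]}) ≥ (2N − 4)·L. -/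

import Mathlib

/-!
Fix a message `k` and condition on the later messages `W_{k+1}, …, W_{N-1}` and the queries. The
answers of servers `n ≥ k + 2` are then determined, so decodability forces the answers of servers
`1, …, k + 1` to carry the `L` units of uncertainty of `W_k`:
`L + H(A_k^{[k]} | W_{≥k}, Q) ≤ ∑_{n ≤ k} H(A_n^{[k]}) + H(A_{k+1}^{[k]} | W_{>k}, Q)`.
Privacy at server `k + 1` turns the last term into the left-hand term of the step for `k + 1`, so
the steps telescope to `(N - 2) L ≤ ∑_k ∑_{n ≤ k} H(A_n^{[k]})`; the final leftover term is at most
`H(W_{N-1}) = L` because server `N` stores only `W_{N-1}`. Conditioning instead on the earlier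
messages gives the mirror bound for `∑_k ∑_{n > k} H(A_n^{[k]})`, and the two bounds add up.
-/

open MeasureTheory

/-- Shannon entropy (in nats) of a random variable `X` taking finitely many values,
with the convention `0 log 0 = 0`. -/
noncomputable def entropy {Ω : Type*} [MeasurableSpace Ω] {S : Type*} [Fintype S]
    (μ : Measure Ω) (X : Ω → S) : ℝ :=
  -∑ s : S, (μ (X ⁻¹' {s})).toReal * Real.log (μ (X ⁻¹' {s})).toReal

/-- Conditional entropy `H(X | Y)`, defined via the chain rule `H(X | Y) = H(X, Y) − H(Y)`. -/
noncomputable def condEntropy {Ω : Type*} [MeasurableSpace Ω] {S T : Type*} [Fintype S]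
    [Fintype T] (μ : Measure Ω) (X : Ω → S) (Y : Ω → T) : ℝ :=
  entropy μ (fun ω => (X ω, Y ω)) - entropy μ Y

/-- Mutual information `I(X ; Y) = H(X) − H(X | Y)`. -/
noncomputable def mutualInfo {Ω : Type*} [MeasurableSpace Ω] {S T : Type*} [Fintype S]
    [Fintype T] (μ : Measure Ω) (X : Ω → S) (Y : Ω → T) : ℝ :=
  entropy μ X - condEntropy μ X Y

/-- Conditional mutual information `I(X ; Y | Z) = H(X | Z) + H(Y | Z) − H(X, Y | Z)`. -/
noncomputable def condMutualInfo {Ω : Type*} [MeasurableSpace Ω] {S T U : Type*} [Fintype S]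
    [Fintype T] [Fintype U] (μ : Measure Ω) (X : Ω → S) (Y : Ω → T) (Z : Ω → U) : ℝ :=
  condEntropy μ X Z + condEntropy μ Y Z - condEntropy μ (fun ω => (X ω, Y ω)) Z

open ProbabilityTheory

open Finset Function Real

section Relabeling

variable {Ω : Type*} [MeasurableSpace Ω] {μ : Measure Ω} {S T U V : Type*}

theorem exists_apply_eq_of_negMulLog_ne_zero {X : Ω → S} {s : S}
    (h : negMulLog (μ.real (X ⁻¹' {s})) ≠ 0) : ∃ ω, X ω = s := by
  by_contra! hX
  exact h (by simp [Set.preimage_singleton_eq_empty.2 fun ⟨ω, hω⟩ => hX ω hω])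

variable [Fintype S] [Fintype T] [Fintype U] [Fintype V]

theorem entropy_eq_sum_negMulLog (X : Ω → S) :
    entropy μ X = ∑ s, negMulLog (μ.real (X ⁻¹' {s})) := by
  simp [entropy, negMulLog, measureReal_def]

theorem entropy_pair_eq_sum (X : Ω → S) (Y : Ω → T) :
    entropy μ (fun ω => (X ω, Y ω)) = ∑ s, ∑ t, negMulLog (μ.real (X ⁻¹' {s} ∩ Y ⁻¹' {t})) := by
  simp only [entropy_eq_sum_negMulLog, Fintype.sum_prod_type, ← Set.singleton_prod_singleton,
    Set.mk_preimage_prod]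

theorem entropy_comp_of_injOn {X : Ω → S} {f : S → T} (hf : Set.InjOn f (Set.range X)) :
    entropy μ (fun ω => f (X ω)) = entropy μ X := by
  have hfiber : ∀ ω, (fun ω => f (X ω)) ⁻¹' {f (X ω)} = X ⁻¹' {X ω} := fun ω => by
    ext ω'
    exact ⟨fun h => hf ⟨ω', rfl⟩ ⟨ω, rfl⟩ h, fun h => congrArg f h⟩
  rw [entropy_eq_sum_negMulLog, entropy_eq_sum_negMulLog]
  refine (sum_bij_ne_zero (fun s _ _ => f s) (fun _ _ _ => mem_univ _) ?_ ?_ ?_).symm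
  · intro s₁ _ h₁ s₂ _ h₂ h
    obtain ⟨ω₁, rfl⟩ := exists_apply_eq_of_negMulLog_ne_zero h₁
    obtain ⟨ω₂, rfl⟩ := exists_apply_eq_of_negMulLog_ne_zero h₂
    exact hf ⟨ω₁, rfl⟩ ⟨ω₂, rfl⟩ h
  · intro t _ ht
    obtain ⟨ω, rfl⟩ := exists_apply_eq_of_negMulLog_ne_zero ht
    exact ⟨X ω, mem_univ _, by rwa [← hfiber], rfl⟩
  · intro s _ hs
    obtain ⟨ω, rfl⟩ := exists_apply_eq_of_negMulLog_ne_zero hs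
    rw [hfiber]

theorem entropy_congr {X : Ω → S} {Y : Ω → T} (hXY : X.FactorsThrough Y)
    (hYX : Y.FactorsThrough X) : entropy μ X = entropy μ Y := by
  have hX : Set.InjOn Prod.fst (Set.range fun ω => (X ω, Y ω)) := by
    rintro _ ⟨ω₁, rfl⟩ _ ⟨ω₂, rfl⟩ h
    exact Prod.ext h (hYX h)
  have hY : Set.InjOn Prod.snd (Set.range fun ω => (X ω, Y ω)) := by
    rintro _ ⟨ω₁, rfl⟩ _ ⟨ω₂, rfl⟩ h
    exact Prod.ext (hXY h) h
  exact (entropy_comp_of_injOn hX).trans (entropy_comp_of_injOn hY).symm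

theorem entropy_unit [IsProbabilityMeasure μ] : entropy μ (fun _ : Ω => ()) = 0 := by
  simp [entropy_eq_sum_negMulLog]

theorem condEntropy_congr_left {X : Ω → S} {X' : Ω → T} (Y : Ω → U)
    (h : X.FactorsThrough X') (h' : X'.FactorsThrough X) :
    condEntropy μ X Y = condEntropy μ X' Y := by
  have : entropy μ (fun ω => (X ω, Y ω)) = entropy μ (fun ω => (X' ω, Y ω)) :=
    entropy_congr (fun a b hab => Prod.ext (h (Prod.mk.inj hab).1) (Prod.mk.inj hab).2)
      (fun a b hab => Prod.ext (h' (Prod.mk.inj hab).1) (Prod.mk.inj hab).2)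
  rw [condEntropy, condEntropy, this]

theorem condEntropy_congr_right (X : Ω → S) {Y : Ω → T} {Y' : Ω → U}
    (h : Y.FactorsThrough Y') (h' : Y'.FactorsThrough Y) :
    condEntropy μ X Y = condEntropy μ X Y' := by
  have : entropy μ (fun ω => (X ω, Y ω)) = entropy μ (fun ω => (X ω, Y' ω)) :=
    entropy_congr (fun a b hab => Prod.ext (Prod.mk.inj hab).1 (h (Prod.mk.inj hab).2))
      (fun a b hab => Prod.ext (Prod.mk.inj hab).1 (h' (Prod.mk.inj hab).2))
  rw [condEntropy, condEntropy, this, entropy_congr h h']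

theorem condEntropy_eq_zero_of_factorsThrough {X : Ω → S} {Y : Ω → T}
    (h : X.FactorsThrough Y) : condEntropy μ X Y = 0 := by
  have : entropy μ (fun ω => (X ω, Y ω)) = entropy μ Y :=
    entropy_congr (fun a b hab => Prod.ext (h hab) hab) (fun a b hab => (Prod.mk.inj hab).2)
  rw [condEntropy, this, sub_self]

theorem condEntropy_pair (X : Ω → S) (Y : Ω → T) (Z : Ω → U) :
    condEntropy μ (fun ω => (X ω, Y ω)) Z
      = condEntropy μ X Z + condEntropy μ Y (fun ω => (X ω, Z ω)) := by
  have : entropy μ (fun ω => ((X ω, Y ω), Z ω)) = entropy μ (fun ω => (Y ω, X ω, Z ω)) :=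
    entropy_congr (fun a b hab => by simp_all) (fun a b hab => by simp_all)
  rw [condEntropy, condEntropy, condEntropy, this]
  ring

theorem condEntropy_insert_tuple {ι : Type*} [DecidableEq ι] (X : Ω → U) (W : ι → Ω → S)
    (Q : Ω → T) (j : ι) (F : Finset ι) :
    condEntropy μ X (fun ω => (W j ω, (fun i : F => W i ω), Q ω))
      = condEntropy μ X (fun ω => ((fun i : (insert j F : Finset ι) => W i ω), Q ω)) := by
  refine condEntropy_congr_right X (fun ω ω' h => ?_) (fun ω ω' h => ?_)
  · obtain ⟨h₁, h₂⟩ := Prod.mk.inj h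
    exact Prod.ext (congrFun h₁ ⟨j, mem_insert_self j F⟩)
      (Prod.ext (funext fun i => congrFun h₁ ⟨i, mem_insert_of_mem i.2⟩) h₂)
  · obtain ⟨h₁, h₂⟩ := Prod.mk.inj h
    obtain ⟨h₂, h₃⟩ := Prod.mk.inj h₂
    refine Prod.ext (funext fun i => ?_) h₃
    rcases mem_insert.1 i.2 with hi | hi
    · simpa [hi] using h₁
    · exact congrFun h₂ ⟨i, hi⟩

end Relabeling

theorem negMulLog_le_sub_sub_mul_log {x y : ℝ} (hx : 0 ≤ x) (hy : 0 < y) :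
    negMulLog x ≤ y - x - x * log y := by
  rcases hx.eq_or_lt with rfl | hx
  · simpa using hy.le
  have h := mul_le_mul_of_nonneg_left (log_le_sub_one_of_pos (div_pos hy hx)) hx.le
  rw [log_div hy.ne' hx.ne', mul_sub_one, mul_div_cancel₀ _ hx.ne'] at h
  rw [negMulLog]
  linarith

theorem sum_negMulLog_add_negMulLog_sum_le {S T : Type*} [Fintype S] [Fintype T]
    (f : S → T → ℝ) (hf : ∀ s t, 0 ≤ f s t) :
    ∑ s, ∑ t, negMulLog (f s t) + negMulLog (∑ s, ∑ t, f s t)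
      ≤ ∑ s, negMulLog (∑ t, f s t) + ∑ t, negMulLog (∑ s, f s t) := by
  set a : S → ℝ := fun s => ∑ t, f s t
  set b : T → ℝ := fun t => ∑ s, f s t
  set c : ℝ := ∑ s, a s
  have hfa : ∀ s t, f s t ≤ a s := fun s t =>
    single_le_sum (fun t _ => hf s t) (mem_univ t)
  have hfb : ∀ s t, f s t ≤ b t := fun s t =>
    single_le_sum (f := fun s => f s t) (fun s _ => hf s t) (mem_univ s)
  have hac : ∀ s, a s ≤ c := fun s =>
    single_le_sum (fun s _ => sum_nonneg fun t _ => hf s t) (mem_univ s)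
  have hbc : ∑ t, b t = c := sum_comm
  -- Gibbs' inequality against the product of the marginals `a s * b t / c`
  have key : ∀ s t, negMulLog (f s t) ≤ a s * b t / c - f s t
      - f s t * log (a s) - f s t * log (b t) + f s t * log c := by
    intro s t
    rcases (hf s t).eq_or_lt with h | h
    · rw [← h]
      simp only [negMulLog_zero, zero_mul, sub_zero, add_zero]
      exact div_nonneg (mul_nonneg (h.le.trans (hfa s t)) (h.le.trans (hfb s t)))
        (h.le.trans ((hfa s t).trans (hac s)))
    have ha := h.trans_le (hfa s t)
    have hb := h.trans_le (hfb s t)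
    have hc := ha.trans_le (hac s)
    have := negMulLog_le_sub_sub_mul_log h.le (div_pos (mul_pos ha hb) hc)
    rw [log_div (mul_pos ha hb).ne' hc.ne', log_mul ha.ne' hb.ne'] at this
    linarith
  have hprod : ∑ s, ∑ t, a s * b t / c = c := by
    simp_rw [← sum_div, ← sum_mul_sum, hbc]
    exact mul_self_div_self c
  have hloga : ∑ s, ∑ t, f s t * log (a s) = -∑ s, negMulLog (a s) := by
    simp [negMulLog, ← sum_mul, a]
  have hlogb : ∑ s, ∑ t, f s t * log (b t) = -∑ t, negMulLog (b t) := by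
    rw [sum_comm]; simp [negMulLog, ← sum_mul, b]
  have hlogc : ∑ s, ∑ t, f s t * log c = -negMulLog c := by
    simp [negMulLog, ← sum_mul, c, a]
  calc ∑ s, ∑ t, negMulLog (f s t) + negMulLog c
      ≤ ∑ s, ∑ t, (a s * b t / c - f s t - f s t * log (a s) - f s t * log (b t)
          + f s t * log c) + negMulLog c := by
        gcongr with s _ t _; exact key s t
    _ ≤ ∑ s, negMulLog (a s) + ∑ t, negMulLog (b t) := by
        simp only [sum_add_distrib, sum_sub_distrib]
        linarith

section Measurable

variable {Ω : Type*} [MeasurableSpace Ω] {μ : Measure Ω} {S T U V : Type*}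
  [Fintype S] [MeasurableSpace S] [MeasurableSingletonClass S]
  [Fintype T] [MeasurableSpace T] [MeasurableSingletonClass T]
  [Fintype U] [MeasurableSpace U] [MeasurableSingletonClass U]
  [Fintype V] [MeasurableSpace V] [MeasurableSingletonClass V]
  {R : Type*} [Fintype R] [MeasurableSpace R] [MeasurableSingletonClass R]
  {X : Ω → S} {Y : Ω → T} {Z : Ω → U}

theorem measureReal_eq_sum_inter_preimage [IsFiniteMeasure μ] {A : Set Ω} (hA : MeasurableSet A)
    (hY : Measurable Y) : μ.real A = ∑ t, μ.real (A ∩ Y ⁻¹' {t}) := by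
  have hdisj : Set.PairwiseDisjoint (univ : Finset T) fun t => A ∩ Y ⁻¹' {t} :=
    fun t _ t' _ htt' => Disjoint.mono Set.inter_subset_right Set.inter_subset_right
      ((Set.disjoint_singleton.2 htt').preimage Y)
  rw [← measureReal_biUnion_finset hdisj fun t _ => hA.inter (hY (measurableSet_singleton t))]
  congr 1
  ext ω
  simp

theorem entropy_submodular [IsFiniteMeasure μ] (hX : Measurable X) (hY : Measurable Y)
    (hZ : Measurable Z) :
    entropy μ (fun ω => (X ω, Y ω, Z ω)) + entropy μ Z
      ≤ entropy μ (fun ω => (X ω, Z ω)) + entropy μ (fun ω => (Y ω, Z ω)) := by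
  have hXZ : ∀ s u, ∑ t, μ.real (X ⁻¹' {s} ∩ (Y ⁻¹' {t} ∩ Z ⁻¹' {u}))
      = μ.real (X ⁻¹' {s} ∩ Z ⁻¹' {u}) := fun s u => by
    rw [measureReal_eq_sum_inter_preimage
      ((hX (measurableSet_singleton s)).inter (hZ (measurableSet_singleton u))) hY]
    simp only [Set.inter_comm (Y ⁻¹' _), Set.inter_assoc]
  have hYZ : ∀ t u, ∑ s, μ.real (X ⁻¹' {s} ∩ (Y ⁻¹' {t} ∩ Z ⁻¹' {u}))
      = μ.real (Y ⁻¹' {t} ∩ Z ⁻¹' {u}) := fun t u => by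
    rw [measureReal_eq_sum_inter_preimage
      ((hY (measurableSet_singleton t)).inter (hZ (measurableSet_singleton u))) hX]
    simp only [Set.inter_comm _ (X ⁻¹' _)]
  have hZ' : ∀ u, ∑ t, μ.real (Y ⁻¹' {t} ∩ Z ⁻¹' {u}) = μ.real (Z ⁻¹' {u}) := fun u => by
    rw [measureReal_eq_sum_inter_preimage (hZ (measurableSet_singleton u)) hY]
    simp only [Set.inter_comm (Y ⁻¹' _)]
  have key := sum_le_sum fun u (_ : u ∈ univ) => sum_negMulLog_add_negMulLog_sum_le
    (fun t s => μ.real (X ⁻¹' {s} ∩ (Y ⁻¹' {t} ∩ Z ⁻¹' {u}))) fun _ _ => measureReal_nonneg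
  simp only [hXZ, hYZ, hZ', sum_add_distrib] at key
  simp only [entropy_eq_sum_negMulLog, Fintype.sum_prod_type_right,
    ← Set.singleton_prod_singleton, Set.mk_preimage_prod]
  linarith

theorem condEntropy_nonneg [IsFiniteMeasure μ] (hX : Measurable X := by fun_prop)
    (hY : Measurable Y := by fun_prop) : 0 ≤ condEntropy μ X Y := by
  have h := entropy_submodular (μ := μ) hX hX hY
  rw [entropy_congr (X := fun ω => (X ω, X ω, Y ω)) (Y := fun ω => (X ω, Y ω))
    (fun a b hab => by simp_all) (fun a b hab => by simp_all)] at h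
  rw [condEntropy]
  linarith

theorem condEntropy_le_condEntropy_of_factorsThrough_right [IsFiniteMeasure μ]
    (X : Ω → S) (h : Y.FactorsThrough Z) (hX : Measurable X := by fun_prop)
    (hY : Measurable Y := by fun_prop) (hZ : Measurable Z := by fun_prop) :
    condEntropy μ X Z ≤ condEntropy μ X Y := by
  have hSSA := entropy_submodular (μ := μ) hX hZ hY
  rw [entropy_congr (X := fun ω => (X ω, Z ω, Y ω)) (Y := fun ω => (X ω, Z ω))
      (fun a b hab => by simp_all [h (Prod.mk.inj hab).2]) (fun a b hab => by simp_all),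
    entropy_congr (X := fun ω => (Z ω, Y ω)) (Y := Z)
      (fun a b hab => by simp_all [h hab]) (fun a b hab => by simp_all)] at hSSA
  rw [condEntropy, condEntropy]
  linarith

theorem condEntropy_le_condEntropy_of_factorsThrough_left [IsFiniteMeasure μ] {X' : Ω → T}
    (Z : Ω → U) (h : X.FactorsThrough X') (hX : Measurable X := by fun_prop)
    (hX' : Measurable X' := by fun_prop) (hZ : Measurable Z := by fun_prop) :
    condEntropy μ X Z ≤ condEntropy μ X' Z := by
  have hnonneg := condEntropy_nonneg (μ := μ) hX' (hX.prodMk hZ)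
  rw [condEntropy, entropy_congr (X := fun ω => (X' ω, X ω, Z ω)) (Y := fun ω => (X' ω, Z ω))
    (fun a b hab => by simp_all [h (Prod.mk.inj hab).1]) (fun a b hab => by simp_all)] at hnonneg
  rw [condEntropy, condEntropy]
  linarith

theorem condEntropy_le_entropy [IsProbabilityMeasure μ] (hX : Measurable X := by fun_prop)
    (hY : Measurable Y := by fun_prop) : condEntropy μ X Y ≤ entropy μ X := by
  have h := condEntropy_le_condEntropy_of_factorsThrough_right (μ := μ) (Y := fun _ => ())
    (Z := Y) X (fun _ _ _ => rfl)
  have hunit : condEntropy μ X (fun _ => ()) = entropy μ X := by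
    rw [condEntropy, entropy_unit, sub_zero]
    exact entropy_congr (fun a b hab => by simp_all) fun a b hab => (Prod.mk.inj hab).1
  exact h.trans hunit.le

theorem condEntropy_pair_le [IsFiniteMeasure μ] (hX : Measurable X := by fun_prop)
    (hY : Measurable Y := by fun_prop) (hZ : Measurable Z := by fun_prop) :
    condEntropy μ (fun ω => (X ω, Y ω)) Z ≤ condEntropy μ X Z + condEntropy μ Y Z := by
  rw [condEntropy_pair]
  gcongr
  exact condEntropy_le_condEntropy_of_factorsThrough_right Y fun a b hab => (Prod.mk.inj hab).2

theorem condEntropy_le_condEntropy_add [IsFiniteMeasure μ] (hX : Measurable X := by fun_prop)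
    (hY : Measurable Y := by fun_prop) (hZ : Measurable Z := by fun_prop) :
    condEntropy μ X Z ≤ condEntropy μ Y Z + condEntropy μ X (fun ω => (Y ω, Z ω)) := by
  rw [← condEntropy_pair]
  exact condEntropy_le_condEntropy_of_factorsThrough_left Z fun a b hab => (Prod.mk.inj hab).2

theorem condEntropy_tuple_le_sum [IsFiniteMeasure μ] {ι : Type*} [DecidableEq ι]
    (F : Finset ι) (X : ι → Ω → S) (hX : ∀ i, Measurable (X i))
    (hZ : Measurable Z := by fun_prop) :
    condEntropy μ (fun ω (i : F) => X i ω) Z ≤ ∑ i ∈ F, condEntropy μ (X i) Z := by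
  induction F using Finset.cons_induction with
  | empty =>
    rw [condEntropy_eq_zero_of_factorsThrough
      fun _ _ _ => funext fun i => (notMem_empty _ i.2).elim, sum_empty]
  | cons a F ha ih =>
    have hsplit : (fun ω (i : cons a F ha) => X i ω).FactorsThrough
        (fun ω => (X a ω, fun i : F => X i ω)) := by
      intro ω ω' h
      obtain ⟨h₁, h₂⟩ := Prod.mk.inj h
      funext i
      rcases mem_cons.1 i.2 with hi | hi
      · simpa [hi] using h₁
      · exact congrFun h₂ ⟨i, hi⟩
    rw [sum_cons, condEntropy_congr_left Z hsplit fun ω ω' h => Prod.ext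
      (congrFun h ⟨a, mem_cons_self a F⟩) (funext fun i => congrFun h ⟨i, mem_cons_of_mem i.2⟩)]
    exact (condEntropy_pair_le (hY := by fun_prop)).trans (by gcongr)

theorem condEntropy_eq_entropy_of_mutualInfo_eq_zero [IsProbabilityMeasure μ] {W : Ω → V}
    (hWZ : mutualInfo μ W Z = 0) (h : X.FactorsThrough W) (hX : Measurable X := by fun_prop)
    (hW : Measurable W := by fun_prop) (hZ : Measurable Z := by fun_prop) :
    condEntropy μ X Z = entropy μ X := by
  refine le_antisymm condEntropy_le_entropy ?_
  have hSSA := entropy_submodular (μ := μ) hW hZ hX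
  rw [entropy_congr (X := fun ω => (W ω, Z ω, X ω)) (Y := fun ω => (W ω, Z ω))
      (fun a b hab => by simp_all [h (Prod.mk.inj hab).1]) (fun a b hab => by simp_all),
    entropy_congr (X := fun ω => (W ω, X ω)) (Y := W)
      (fun a b hab => by simp_all [h hab]) (fun a b hab => by simp_all),
    entropy_congr (X := fun ω => (Z ω, X ω)) (Y := fun ω => (X ω, Z ω))
      (fun a b hab => by simp_all) (fun a b hab => by simp_all)] at hSSA
  rw [mutualInfo, condEntropy] at hWZ
  rw [condEntropy]
  linarith

theorem sum_measureReal_preimage_singleton_eq_one [IsProbabilityMeasure μ]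
    (hX : Measurable X) : ∑ s, μ.real (X ⁻¹' {s}) = 1 := by
  rw [sum_measureReal_preimage_singleton _ fun s _ => hX (measurableSet_singleton s)]
  simp

theorem ProbabilityTheory.IndepFun.entropy_pair_eq_add [IsProbabilityMeasure μ]
    (h : IndepFun X Y μ) (hX : Measurable X := by fun_prop) (hY : Measurable Y := by fun_prop) :
    entropy μ (fun ω => (X ω, Y ω)) = entropy μ X + entropy μ Y := by
  have hmul : ∀ s t, μ.real (X ⁻¹' {s} ∩ Y ⁻¹' {t}) = μ.real (X ⁻¹' {s}) * μ.real (Y ⁻¹' {t}) :=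
    fun s t => by
      simp [measureReal_def, h.measure_inter_preimage_eq_mul _ _ (measurableSet_singleton s)
        (measurableSet_singleton t)]
  rw [entropy_pair_eq_sum, entropy_eq_sum_negMulLog, entropy_eq_sum_negMulLog]
  simp only [hmul, negMulLog_mul, sum_add_distrib, ← mul_sum, ← sum_mul,
    sum_measureReal_preimage_singleton_eq_one hX, sum_measureReal_preimage_singleton_eq_one hY,
    one_mul]

theorem condEntropy_eq_zero_of_factorsThrough_right [IsFiniteMeasure μ] (h₀ : condEntropy μ X Y = 0)
    (h : Y.FactorsThrough Z) (hX : Measurable X := by fun_prop) (hY : Measurable Y := by fun_prop)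
    (hZ : Measurable Z := by fun_prop) : condEntropy μ X Z = 0 :=
  le_antisymm (h₀ ▸ condEntropy_le_condEntropy_of_factorsThrough_right X h) condEntropy_nonneg

/-- In mutual-information form, `H(X | C) ≤ I(X ; Y | C)`. -/
theorem condEntropy_add_condEntropy_le_of_recoverable [IsFiniteMeasure μ] {C : Ω → V}
    {D : Ω → R} (hZ₀ : condEntropy μ Z C = 0) (hX₀ : condEntropy μ X D = 0)
    (hrec : D.FactorsThrough fun ω => (Z ω, Y ω, C ω)) (hX : Measurable X := by fun_prop)
    (hY : Measurable Y := by fun_prop) (hZ : Measurable Z := by fun_prop)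
    (hC : Measurable C := by fun_prop) (hD : Measurable D := by fun_prop) :
    condEntropy μ X C + condEntropy μ Y (fun ω => (X ω, C ω)) ≤ condEntropy μ Y C := by
  have hswap : condEntropy μ (fun ω => (X ω, Y ω)) C = condEntropy μ (fun ω => (Y ω, X ω)) C :=
    condEntropy_congr_left C (fun a b hab => by simp_all) (fun a b hab => by simp_all)
  rw [condEntropy_pair, condEntropy_pair] at hswap
  have hXYC : condEntropy μ X (fun ω => (Y ω, C ω)) ≤ 0 := calc
    _ ≤ condEntropy μ Z (fun ω => (Y ω, C ω)) + condEntropy μ X (fun ω => (Z ω, Y ω, C ω)) :=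
      condEntropy_le_condEntropy_add
    _ ≤ condEntropy μ Z C + condEntropy μ X D := by
      gcongr
      · exact condEntropy_le_condEntropy_of_factorsThrough_right Z
          fun a b hab => (Prod.mk.inj hab).2
      · exact condEntropy_le_condEntropy_of_factorsThrough_right X hrec
    _ = 0 := by rw [hZ₀, hX₀, add_zero]
  linarith

theorem indepFun_tuple_of_iIndepFun {ι : Type*} {F : Finset ι} {X : ι → Ω → S}
    (h : iIndepFun (fun i : F => X i.1) μ) (hX : ∀ i, Measurable (X i)) {k : ι} (hk : k ∈ F)
    {G : Finset ι} (hG : G ⊆ F) (hkG : k ∉ G) : IndepFun (X k) (fun ω (i : G) => X i ω) μ := by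
  classical
  have hdisj : Disjoint {⟨k, hk⟩} (G.subtype (· ∈ F)) := by simpa using hkG
  exact (h.indepFun_finset _ _ hdisj fun i => hX i.1).comp
    (φ := fun v => v ⟨⟨k, hk⟩, mem_singleton_self _⟩)
    (ψ := fun v (i : G) => v ⟨⟨i, hG i.2⟩, by simp⟩) .of_discrete .of_discrete

end Measurable

theorem sub_one_mul_le_sum_of_telescoping {L : ℝ} {M : ℕ} {x y c : ℕ → ℝ} (hM : 1 ≤ M)
    (hstep : ∀ k ∈ Icc 1 M, L + x k ≤ c k + y k) (hlink : ∀ k ∈ Ico 1 M, y k = x (k + 1))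
    (hx : 0 ≤ x 1) (hy : y M ≤ L) : ((M : ℝ) - 1) * L ≤ ∑ k ∈ Icc 1 M, c k := by
  have key : ∀ m, 1 ≤ m → m ≤ M → m * L + x 1 ≤ ∑ k ∈ Icc 1 m, c k + y m := by
    intro m hm hmM
    induction m, hm using Nat.le_induction with
    | base => simpa using hstep 1 (by simp; omega)
    | succ m hm ih =>
      have := hstep (m + 1) (by simp; omega)
      rw [hlink m (by simp; omega)] at ih
      rw [sum_Icc_succ_top (by omega)]
      push_cast
      linarith [ih (by omega)]
  linarith [key M hM le_rfl]

theorem sub_one_mul_le_sum_of_telescoping_rev {L : ℝ} {M : ℕ} {x y c : ℕ → ℝ} (hM : 1 ≤ M)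
    (hstep : ∀ k ∈ Icc 1 M, L + x k ≤ c k + y k) (hlink : ∀ k ∈ Ioc 1 M, y k = x (k - 1))
    (hx : 0 ≤ x M) (hy : y 1 ≤ L) : ((M : ℝ) - 1) * L ≤ ∑ k ∈ Icc 1 M, c k := by
  have hrefl : ∑ k ∈ Icc 1 M, c (M + 1 - k) = ∑ k ∈ Icc 1 M, c k :=
    sum_nbij' (fun k => M + 1 - k) (fun k => M + 1 - k) (by simp; omega) (by simp; omega)
      (by simp; omega) (by simp; omega) fun _ _ => rfl
  rw [← hrefl]
  refine sub_one_mul_le_sum_of_telescoping (x := fun k => x (M + 1 - k))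
    (y := fun k => y (M + 1 - k)) hM (fun k hk => hstep _ (by simp at hk ⊢; omega))
    (fun k hk => ?_) (by simpa using hx) (by simpa using hy)
  simp only [mem_Ico] at hk
  rw [hlink _ (by simp; omega), Nat.sub_sub]

section LocalPIR

variable {Ω : Type*} [MeasurableSpace Ω] {σ β α : Type*}
  [Fintype σ] [MeasurableSpace σ] [MeasurableSingletonClass σ]
  [Fintype β] [MeasurableSpace β] [MeasurableSingletonClass β]
  [Fintype α] [MeasurableSpace α]

/-- `W k` is message `k ∈ [1, N - 1]`, `Q` the queries and `A n k` the answer `A_n^{[k]}` of server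
`n ∈ [1, N]`; `privacy` is the consequence of local user privacy given by Lemmas 1 and 2. -/
structure IsLocalPIROnPath (μ : Measure Ω) (N : ℕ) (L : ℝ) (W : ℕ → Ω → σ) (Q : Ω → β)
    (A : ℕ → ℕ → Ω → α) : Prop where
  measurable_msg : ∀ k, Measurable (W k)
  measurable_query : Measurable Q
  measurable_answer : ∀ n k, Measurable (A n k)
  iIndepFun_msg : iIndepFun (fun k : (Icc 1 (N - 1) : Finset ℕ) => W k.1) μ
  entropy_msg : ∀ k ∈ Icc 1 (N - 1), entropy μ (W k) = L
  mutualInfo_msg_query :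
    mutualInfo μ (fun ω => (fun k : (Icc 1 (N - 1) : Finset ℕ) => W k.1 ω)) Q = 0
  answer_first : ∀ k ∈ Icc 1 (N - 1), condEntropy μ (A 1 k) (fun ω => (W 1 ω, Q ω)) = 0
  answer_last : ∀ k ∈ Icc 1 (N - 1), condEntropy μ (A N k) (fun ω => (W (N - 1) ω, Q ω)) = 0
  answer : ∀ k ∈ Icc 1 (N - 1), ∀ n, 2 ≤ n → n ≤ N - 1 →
    condEntropy μ (A n k) (fun ω => (W (n - 1) ω, W n ω, Q ω)) = 0
  decode : ∀ k ∈ Icc 1 (N - 1),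
    condEntropy μ (W k) (fun ω => ((fun n : (Icc 1 N : Finset ℕ) => A n.1 k ω), Q ω)) = 0
  privacy : ∀ n, 2 ≤ n → n ≤ N - 1 → ∀ S : Finset ℕ, S ⊆ Icc 1 (N - 1) →
    condEntropy μ (A n n) (fun ω => ((fun ℓ : S => W ℓ.1 ω), Q ω))
      = condEntropy μ (A n (n - 1)) (fun ω => ((fun ℓ : S => W ℓ.1 ω), Q ω))

def pathStorage (N n : ℕ) : Finset ℕ := Icc (n - 1) n ∩ Icc 1 (N - 1)

namespace IsLocalPIROnPath

variable {μ : Measure Ω} [IsProbabilityMeasure μ] {N : ℕ} {L : ℝ} {W : ℕ → Ω → σ} {Q : Ω → β}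
  {A : ℕ → ℕ → Ω → α}

theorem condEntropy_answer_eq_zero [MeasurableSingletonClass α] (h : IsLocalPIROnPath μ N L W Q A)
    {n k : ℕ} (hn : n ∈ Icc 1 N) (hk : k ∈ Icc 1 (N - 1)) {S : Finset ℕ}
    (hS : pathStorage N n ⊆ S) :
    condEntropy μ (A n k) (fun ω => ((fun ℓ : S => W ℓ ω), Q ω)) = 0 := by
  have hW := h.measurable_msg
  have hQ := h.measurable_query
  have hA := h.measurable_answer
  have hmem : ∀ ℓ, n - 1 ≤ ℓ → ℓ ≤ n → 1 ≤ ℓ → ℓ ≤ N - 1 → ℓ ∈ S := fun ℓ h₁ h₂ h₃ h₄ =>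
    hS (by simp [pathStorage]; omega)
  simp only [mem_Icc] at hn hk
  rcases (by omega : n = 1 ∨ n = N ∨ 2 ≤ n ∧ n ≤ N - 1) with rfl | rfl | ⟨hn₂, hnN⟩
  · refine condEntropy_eq_zero_of_factorsThrough_right (h.answer_first k (by simp; omega))
      fun ω ω' e => ?_
    obtain ⟨e, e'⟩ := Prod.mk.inj e
    exact Prod.ext (congrFun e ⟨1, hmem 1 (by omega) le_rfl le_rfl (by omega)⟩) e'
  · refine condEntropy_eq_zero_of_factorsThrough_right (h.answer_last k (by simp; omega))
      fun ω ω' e => ?_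
    obtain ⟨e, e'⟩ := Prod.mk.inj e
    exact Prod.ext (congrFun e ⟨n - 1, hmem _ le_rfl (by omega) (by omega) le_rfl⟩) e'
  · refine condEntropy_eq_zero_of_factorsThrough_right (h.answer k (by simp; omega) n hn₂ hnN)
      fun ω ω' e => ?_
    obtain ⟨e, e'⟩ := Prod.mk.inj e
    exact Prod.ext (congrFun e ⟨n - 1, hmem _ le_rfl (by omega) (by omega) (by omega)⟩)
      (Prod.ext (congrFun e ⟨n, hmem _ (by omega) le_rfl (by omega) hnN⟩) e')

theorem condEntropy_msg_eq (h : IsLocalPIROnPath μ N L W Q A) {k : ℕ} (hk : k ∈ Icc 1 (N - 1))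
    {S : Finset ℕ} (hS : S ⊆ Icc 1 (N - 1)) (hkS : k ∉ S) :
    condEntropy μ (W k) (fun ω => ((fun ℓ : S => W ℓ ω), Q ω)) = L := by
  have hW := h.measurable_msg
  have hQ := h.measurable_query
  have hindep := indepFun_tuple_of_iIndepFun h.iIndepFun_msg hW hk hS hkS
  have hpair := condEntropy_pair (μ := μ) (fun ω (ℓ : S) => W ℓ ω) (W k) Q
  have hS' : (fun ω (ℓ : S) => W ℓ ω).FactorsThrough
      fun ω (ℓ : (Icc 1 (N - 1) : Finset ℕ)) => W ℓ ω :=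
    fun ω ω' e => funext fun ℓ => congrFun e ⟨ℓ, hS ℓ.2⟩
  have hSk : (fun ω => ((fun ℓ : S => W ℓ ω), W k ω)).FactorsThrough
      fun ω (ℓ : (Icc 1 (N - 1) : Finset ℕ)) => W ℓ ω :=
    fun ω ω' e => Prod.ext (hS' e) (congrFun e ⟨k, hk⟩)
  rw [condEntropy_eq_entropy_of_mutualInfo_eq_zero h.mutualInfo_msg_query hSk,
    condEntropy_eq_entropy_of_mutualInfo_eq_zero h.mutualInfo_msg_query hS',
    hindep.symm.entropy_pair_eq_add, h.entropy_msg k hk] at hpair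
  linarith

theorem condEntropy_answer_le [MeasurableSingletonClass α] (h : IsLocalPIROnPath μ N L W Q A)
    {n k j : ℕ} (hn : n ∈ Icc 1 N) (hk : k ∈ Icc 1 (N - 1)) (hj : j ∈ Icc 1 (N - 1))
    {S : Finset ℕ} (hS : S ⊆ Icc 1 (N - 1)) (hjS : j ∉ S) (hstore : pathStorage N n ⊆ insert j S) :
    condEntropy μ (A n k) (fun ω => ((fun ℓ : S => W ℓ ω), Q ω)) ≤ L := by
  have hW := h.measurable_msg
  have hQ := h.measurable_query
  have hA := h.measurable_answer
  calc _ ≤ condEntropy μ (W j) (fun ω => ((fun ℓ : S => W ℓ ω), Q ω))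
        + condEntropy μ (A n k) (fun ω => (W j ω, (fun ℓ : S => W ℓ ω), Q ω)) :=
      condEntropy_le_condEntropy_add
    _ = L := by
      rw [h.condEntropy_msg_eq hj hS hjS, condEntropy_insert_tuple,
        h.condEntropy_answer_eq_zero hn hk hstore, add_zero]

theorem add_condEntropy_answer_le [MeasurableSingletonClass α] (h : IsLocalPIROnPath μ N L W Q A)
    {k : ℕ} (hk : k ∈ Icc 1 (N - 1)) {S : Finset ℕ} (hS : S ⊆ Icc 1 (N - 1)) (hkS : k ∉ S)
    {I : Finset ℕ} {j m : ℕ} (hj : j ∈ I) (hm : m ∉ I)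
    (hfar : ∀ n ∈ Icc 1 N, n ∉ insert m I → pathStorage N n ⊆ S) :
    L + condEntropy μ (A j k) (fun ω => ((fun ℓ : (insert k S : Finset ℕ) => W ℓ ω), Q ω))
      ≤ ∑ n ∈ I, entropy μ (A n k)
        + condEntropy μ (A m k) (fun ω => ((fun ℓ : S => W ℓ ω), Q ω)) := by
  have hW := h.measurable_msg
  have hQ := h.measurable_query
  have hA := h.measurable_answer
  set C := fun ω => ((fun ℓ : S => W ℓ ω), Q ω)
  set far := (Icc 1 N).filter (· ∉ insert m I)
  have hfarC : condEntropy μ (fun ω (n : far) => A n k ω) C = 0 := by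
    refine le_antisymm ((condEntropy_tuple_le_sum far (fun n => A n k) fun n => hA n k).trans_eq
      (sum_eq_zero fun n hn => ?_)) condEntropy_nonneg
    obtain ⟨hn, hnI⟩ := mem_filter.1 hn
    exact h.condEntropy_answer_eq_zero hn hk (hfar n hn hnI)
  have hrec : (fun ω => ((fun n : (Icc 1 N : Finset ℕ) => A n k ω), Q ω)).FactorsThrough
      fun ω => ((fun n : far => A n k ω), (fun n : (insert m I : Finset ℕ) => A n k ω), C ω) := by
    intro ω ω' e
    obtain ⟨e₁, e₂⟩ := Prod.mk.inj e
    obtain ⟨e₂, e₃⟩ := Prod.mk.inj e₂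
    refine Prod.ext (funext fun n => ?_) (Prod.mk.inj e₃).2
    by_cases hn : n.1 ∈ insert m I
    · exact congrFun e₂ ⟨n, hn⟩
    · exact congrFun e₁ ⟨n, mem_filter.2 ⟨n.2, hn⟩⟩
  have key := condEntropy_add_condEntropy_le_of_recoverable hfarC (h.decode k hk) hrec
  have hlower : condEntropy μ (A j k) (fun ω => (W k ω, C ω))
      ≤ condEntropy μ (fun ω (n : (insert m I : Finset ℕ)) => A n k ω) (fun ω => (W k ω, C ω)) :=
    condEntropy_le_condEntropy_of_factorsThrough_left _ fun ω ω' e =>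
      congrFun e ⟨j, mem_insert_of_mem hj⟩
  have hupper : condEntropy μ (fun ω (n : (insert m I : Finset ℕ)) => A n k ω) C
      ≤ ∑ n ∈ I, entropy μ (A n k) + condEntropy μ (A m k) C := by
    refine (condEntropy_tuple_le_sum _ (fun n => A n k) fun n => hA n k).trans ?_
    rw [sum_insert hm, add_comm]
    gcongr with n
    exact condEntropy_le_entropy
  rw [h.condEntropy_msg_eq hk hS hkS] at key
  rw [condEntropy_insert_tuple] at hlower
  linarith

theorem le_sum_entropy_lower_answers [MeasurableSingletonClass α]
    (h : IsLocalPIROnPath μ N L W Q A) (hN : 2 ≤ N) :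
    ((N - 1 : ℕ) - 1 : ℝ) * L ≤ ∑ k ∈ Icc 1 (N - 1), ∑ n ∈ Icc 1 k, entropy μ (A n k) := by
  have hW := h.measurable_msg
  have hQ := h.measurable_query
  have hA := h.measurable_answer
  refine sub_one_mul_le_sum_of_telescoping (by omega)
    (x := fun k => condEntropy μ (A k k) (fun ω => ((fun ℓ : Icc k (N - 1) => W ℓ ω), Q ω)))
    (y := fun k => condEntropy μ (A (k + 1) k)
      (fun ω => ((fun ℓ : Icc (k + 1) (N - 1) => W ℓ ω), Q ω)))
    (fun k hk => ?_) (fun k hk => ?_) condEntropy_nonneg ?_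
  · have hk' := mem_Icc.1 hk
    have := h.add_condEntropy_answer_le hk (S := Icc (k + 1) (N - 1)) (I := Icc 1 k) (j := k)
      (m := k + 1) (fun ℓ hℓ => by simp at hℓ ⊢; omega) (by simp) (by simp; omega) (by simp)
      fun n hn hnI ℓ hℓ => by simp [pathStorage] at hn hnI hℓ ⊢; omega
    rwa [insert_Icc_add_one_left_eq_Icc hk'.2] at this
  · have hk' := mem_Ico.1 hk
    simpa using (h.privacy (k + 1) (by omega) (by omega) (Icc (k + 1) (N - 1))
      fun ℓ hℓ => by simp at hℓ ⊢; omega).symm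
  · have := h.condEntropy_answer_le (n := N) (k := N - 1) (j := N - 1) (S := Icc N (N - 1))
      (by simp; omega) (by simp; omega) (by simp; omega) (fun ℓ hℓ => by simp at hℓ; omega)
      (by simp; omega) fun ℓ hℓ => by simp [pathStorage] at hℓ ⊢; omega
    rwa [Nat.sub_add_cancel (by omega)]

theorem le_sum_entropy_upper_answers [MeasurableSingletonClass α]
    (h : IsLocalPIROnPath μ N L W Q A) (hN : 2 ≤ N) :
    ((N - 1 : ℕ) - 1 : ℝ) * L ≤ ∑ k ∈ Icc 1 (N - 1), ∑ n ∈ Icc (k + 1) N, entropy μ (A n k) := by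
  have hW := h.measurable_msg
  have hQ := h.measurable_query
  have hA := h.measurable_answer
  refine sub_one_mul_le_sum_of_telescoping_rev (by omega)
    (x := fun k => condEntropy μ (A (k + 1) k) (fun ω => ((fun ℓ : Icc 1 k => W ℓ ω), Q ω)))
    (y := fun k => condEntropy μ (A k k) (fun ω => ((fun ℓ : Icc 1 (k - 1) => W ℓ ω), Q ω)))
    (fun k hk => ?_) (fun k hk => ?_) condEntropy_nonneg ?_
  · have hk' := mem_Icc.1 hk
    have := h.add_condEntropy_answer_le hk (S := Icc 1 (k - 1)) (I := Icc (k + 1) N) (j := k + 1)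
      (m := k) (fun ℓ hℓ => by simp at hℓ ⊢; omega) (by simp; omega) (by simp; omega) (by simp)
      fun n hn hnI ℓ hℓ => by simp [pathStorage] at hn hnI hℓ ⊢; omega
    rwa [insert_Icc_sub_one_right_eq_Icc hk'.1] at this
  · have hk' := mem_Ioc.1 hk
    have := h.privacy k (by omega) (by omega) (Icc 1 (k - 1)) fun ℓ hℓ => by simp at hℓ ⊢; omega
    rwa [Nat.sub_add_cancel (by omega : 1 ≤ k)]
  · exact h.condEntropy_answer_le (n := 1) (k := 1) (j := 1) (S := Icc 1 0)
      (by simp; omega) (by simp; omega) (by simp; omega) (by simp) (by simp)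
      fun ℓ hℓ => by simp [pathStorage] at hℓ ⊢; omega

theorem le_sum_entropy_answer [MeasurableSingletonClass α] (h : IsLocalPIROnPath μ N L W Q A)
    (hN : 2 ≤ N) :
    (2 * (N : ℝ) - 4) * L ≤ ∑ k ∈ Icc 1 (N - 1), ∑ n ∈ Icc 1 N, entropy μ (A n k) := by
  have hsplit : ∀ k ∈ Icc 1 (N - 1), ∑ n ∈ Icc 1 k, entropy μ (A n k)
      + ∑ n ∈ Icc (k + 1) N, entropy μ (A n k) = ∑ n ∈ Icc 1 N, entropy μ (A n k) := by
    intro k hk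
    have hunion : Icc 1 N = Icc 1 k ∪ Icc (k + 1) N := by
      ext n
      simp only [mem_Icc, mem_union] at hk ⊢
      omega
    rw [hunion, sum_union (disjoint_left.2 fun n h₁ h₂ => by simp at h₁ h₂; omega)]
  calc (2 * (N : ℝ) - 4) * L = ((N - 1 : ℕ) - 1 : ℝ) * L + ((N - 1 : ℕ) - 1 : ℝ) * L := by
        push_cast [Nat.cast_sub (by omega : 1 ≤ N)]
        ring
    _ ≤ ∑ k ∈ Icc 1 (N - 1), ∑ n ∈ Icc 1 k, entropy μ (A n k)
        + ∑ k ∈ Icc 1 (N - 1), ∑ n ∈ Icc (k + 1) N, entropy μ (A n k) :=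
      add_le_add (h.le_sum_entropy_lower_answers hN) (h.le_sum_entropy_upper_answers hN)
    _ = _ := by rw [← sum_add_distrib, sum_congr rfl hsplit]

end IsLocalPIROnPath

end LocalPIR

theorem stmt_12_general {Ω : Type*} [MeasurableSpace Ω] (μ : Measure Ω) [IsProbabilityMeasure μ]
    (N : ℕ) (hN : 3 ≤ N) (L : ℝ)
    {σ β α : Type*} [Fintype σ] [Fintype β] [Fintype α]
    [MeasurableSpace σ] [MeasurableSingletonClass σ]
    [MeasurableSpace β] [MeasurableSingletonClass β]
    [MeasurableSpace α] [MeasurableSingletonClass α]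
    (W : ℕ → Ω → σ) (Q : Ω → β) (A : ℕ → ℕ → Ω → α)
    (hWmeas : ∀ k, Measurable (W k)) (hQmeas : Measurable Q)
    (hAmeas : ∀ n k, Measurable (A n k))
    (hWindep : iIndepFun
      (fun k : (Finset.Icc 1 (N - 1) : Finset ℕ) => W k.1) μ)
    (hWent : ∀ k ∈ Finset.Icc 1 (N - 1), entropy μ (W k) = L)
    (hQindep : mutualInfo μ
      (fun ω => (fun k : (Finset.Icc 1 (N - 1) : Finset ℕ) => W k.1 ω)) Q = 0)
    (hdet1 : ∀ k ∈ Finset.Icc 1 (N - 1),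
      condEntropy μ (A 1 k) (fun ω => (W 1 ω, Q ω)) = 0)
    (hdetN : ∀ k ∈ Finset.Icc 1 (N - 1),
      condEntropy μ (A N k) (fun ω => (W (N - 1) ω, Q ω)) = 0)
    (hdet : ∀ k ∈ Finset.Icc 1 (N - 1), ∀ n, 2 ≤ n → n ≤ N - 1 →
      condEntropy μ (A n k) (fun ω => (W (n - 1) ω, W n ω, Q ω)) = 0)
    (hdec : ∀ k ∈ Finset.Icc 1 (N - 1),
      condEntropy μ (W k)
        (fun ω => ((fun n : (Finset.Icc 1 N : Finset ℕ) => A n.1 k ω), Q ω)) = 0)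
    (hpriv : ∀ n, 2 ≤ n → n ≤ N - 1 → ∀ S : Finset ℕ, S ⊆ Finset.Icc 1 (N - 1) →
      condEntropy μ (A n n) (fun ω => ((fun ℓ : S => W ℓ.1 ω), Q ω))
        = condEntropy μ (A n (n - 1)) (fun ω => ((fun ℓ : S => W ℓ.1 ω), Q ω))) :
    ∑ k ∈ Finset.Icc 1 (N - 1), ∑ n ∈ Finset.Icc 1 N, entropy μ (A n k)
      ≥ (2 * (N : ℝ) - 4) * L :=
  IsLocalPIROnPath.le_sum_entropy_answer
    ⟨hWmeas, hQmeas, hAmeas, hWindep, hWent, hQindep, hdet1, hdetN, hdet, hdec, hpriv⟩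
    (by omega)

/-- Converse bound for local PIR on the path graph `P_N` (server `1` stores `W_1`, server `N`
stores `W_{N−1}`, and server `n` for `2 ≤ n ≤ N−1` stores `W_{n−1}, W_n`): if the messages
`W_1, …, W_{N−1}` are mutually independent with `H(W_k) = L`, the queries `Q` are independent
of the messages, each answer `A_n^{[k]}` (here `A n k`) is a deterministic function of the
server's storage and `Q`, the desired message is decodable from all the answers and `Q`, and
the privacy-swap equality `H(A_n^{[n]} | W_S, Q) = H(A_n^{[n−1]} | W_S, Q)` holds for every
`2 ≤ n ≤ N−1` and every subset `S ⊆ {1, …, N−1}` of message indices, then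
`∑_{k=1}^{N−1} ∑_{n=1}^{N} H(A_n^{[k]}) ≥ (2N − 4)·L`. -/
theorem stmt_12 {Ω : Type*} [MeasurableSpace Ω] (μ : Measure Ω) [IsProbabilityMeasure μ]
    (N : ℕ) (hN : 3 ≤ N) (L : ℝ) (hL : 0 ≤ L)
    {σ β α : Type*} [Fintype σ] [Fintype β] [Fintype α]
    [MeasurableSpace σ] [MeasurableSingletonClass σ]
    [MeasurableSpace β] [MeasurableSingletonClass β]
    [MeasurableSpace α] [MeasurableSingletonClass α]
    (W : ℕ → Ω → σ) (Q : Ω → β) (A : ℕ → ℕ → Ω → α)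
    (hWmeas : ∀ k, Measurable (W k)) (hQmeas : Measurable Q)
    (hAmeas : ∀ n k, Measurable (A n k))
    (hWindep : iIndepFun
      (fun k : (Finset.Icc 1 (N - 1) : Finset ℕ) => W k.1) μ)
    (hWent : ∀ k ∈ Finset.Icc 1 (N - 1), entropy μ (W k) = L)
    (hQindep : mutualInfo μ
      (fun ω => (fun k : (Finset.Icc 1 (N - 1) : Finset ℕ) => W k.1 ω)) Q = 0)
    (hdet1 : ∀ k ∈ Finset.Icc 1 (N - 1),
      condEntropy μ (A 1 k) (fun ω => (W 1 ω, Q ω)) = 0)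
    (hdetN : ∀ k ∈ Finset.Icc 1 (N - 1),
      condEntropy μ (A N k) (fun ω => (W (N - 1) ω, Q ω)) = 0)
    (hdet : ∀ k ∈ Finset.Icc 1 (N - 1), ∀ n, 2 ≤ n → n ≤ N - 1 →
      condEntropy μ (A n k) (fun ω => (W (n - 1) ω, W n ω, Q ω)) = 0)
    (hdec : ∀ k ∈ Finset.Icc 1 (N - 1),
      condEntropy μ (W k)
        (fun ω => ((fun n : (Finset.Icc 1 N : Finset ℕ) => A n.1 k ω), Q ω)) = 0)
    (hpriv : ∀ n, 2 ≤ n → n ≤ N - 1 → ∀ S : Finset ℕ, S ⊆ Finset.Icc 1 (N - 1) →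
      condEntropy μ (A n n) (fun ω => ((fun ℓ : S => W ℓ.1 ω), Q ω))
        = condEntropy μ (A n (n - 1)) (fun ω => ((fun ℓ : S => W ℓ.1 ω), Q ω))) :
    ∑ k ∈ Finset.Icc 1 (N - 1), ∑ n ∈ Finset.Icc 1 N, entropy μ (A n k)
      ≥ (2 * (N : ℝ) - 4) * L :=
  stmt_12_general μ N hN L W Q A hWmeas hQmeas hAmeas hWindep hWent hQindep hdet1 hdetN hdet hdec
    hpriv
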